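/- If β_t = c T^{-1/4} for all t with c > 0 and |g_t| ≤ B, then the dual iterates μ_t defined by μ_1 = 0 and μ_{t+1} = max(μ_t + β_t g_t, 0) satisfy Σ_{t=1}^T μ_t g_t ≥ -(c B² / 2) T^{3/4}. -/

import Mathlib

/-!
Projection onto `[0, ∞)` is non-expansive, so `μ_{t+1}² ≤ (μ_t + β g_t)² = μ_t² + 2β μ_t g_t + β² g_t²`.
Summing over `t ≤ T` telescopes to `0 ≤ μ_{T+1}² ≤ 2β ∑ μ_t g_t + T β² B²`, and
`T β / 2 = (c / 2) T^{3/4}` for `β = c T^{-1/4}`.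
-/

lemma sq_max_zero_le (x : ℝ) : max x 0 ^ 2 ≤ x ^ 2 := by
  rcases le_total 0 x with hx | hx
  · rw [max_eq_left hx]
  · rw [max_eq_right hx]
    simpa using sq_nonneg x

section ProjectedDualAscent

variable {μ g : ℕ → ℝ} {b : ℝ}

lemma sq_succ_le_of_projected_step (hrec : ∀ t, μ (t + 1) = max (μ t + b * g t) 0) (t : ℕ) :
    μ (t + 1) ^ 2 ≤ μ t ^ 2 + 2 * b * (μ t * g t) + b ^ 2 * g t ^ 2 := by
  calc μ (t + 1) ^ 2 ≤ (μ t + b * g t) ^ 2 := hrec t ▸ sq_max_zero_le _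
    _ = μ t ^ 2 + 2 * b * (μ t * g t) + b ^ 2 * g t ^ 2 := by ring

lemma sq_sub_sq_le_sum_of_projected_step (hrec : ∀ t, μ (t + 1) = max (μ t + b * g t) 0)
    (N : ℕ) :
    μ (N + 1) ^ 2 - μ 1 ^ 2 ≤
      2 * b * ∑ t ∈ Finset.Icc 1 N, μ t * g t + b ^ 2 * ∑ t ∈ Finset.Icc 1 N, g t ^ 2 := by
  induction N with
  | zero => simp
  | succ n ih =>
    rw [Finset.sum_Icc_succ_top (by omega), Finset.sum_Icc_succ_top (by omega)]
    linarith [sq_succ_le_of_projected_step hrec (n + 1)]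

lemma sum_mul_ge_of_projected_step (hrec : ∀ t, μ (t + 1) = max (μ t + b * g t) 0)
    {B : ℝ} (hb : 0 < b) (hg : ∀ t, |g t| ≤ B)
    (hμ1 : μ 1 = 0) (N : ℕ) :
    -(N * b * B ^ 2 / 2) ≤ ∑ t ∈ Finset.Icc 1 N, μ t * g t := by
  have hgsq : ∑ t ∈ Finset.Icc 1 N, g t ^ 2 ≤ N * B ^ 2 := by
    simpa using Finset.sum_le_sum (s := Finset.Icc 1 N) fun t _ =>
      sq_le_sq' (neg_le_of_abs_le (hg t)) (le_of_abs_le (hg t))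
  have htel := sq_sub_sq_le_sum_of_projected_step hrec N
  rw [hμ1] at htel
  have : -(N * b ^ 2 * B ^ 2) ≤ 2 * b * ∑ t ∈ Finset.Icc 1 N, μ t * g t := by
    nlinarith [sq_nonneg (μ (N + 1)), sq_nonneg b]
  rw [← mul_le_mul_iff_of_pos_left (by positivity : 0 < 2 * b)]
  linarith

end ProjectedDualAscent

lemma natCast_mul_div_rpow_one_fourth {T : ℕ} (hT : 1 ≤ T) (c : ℝ) :
    T * (c / (T : ℝ) ^ ((1 : ℝ) / 4)) = c * (T : ℝ) ^ ((3 : ℝ) / 4) := by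
  have hTpos : (0 : ℝ) < T := by exact_mod_cast hT
  rw [show (3 : ℝ) / 4 = 1 - 1 / 4 by norm_num, Real.rpow_sub hTpos, Real.rpow_one]
  ring

theorem amortized_dual_penalty_general (μ g β : ℕ → ℝ) (T : ℕ) (hT : 1 ≤ T)
    (c B : ℝ) (hc : 0 < c)
    (hg : ∀ t, |g t| ≤ B)
    (hβ : ∀ t, β t = c / (T : ℝ) ^ ((1 : ℝ) / 4))
    (hμ1 : μ 1 = 0)
    (hrec : ∀ t, μ (t + 1) = max (μ t + β t * g t) 0) :
    ∑ t ∈ Finset.Icc 1 T, μ t * g t ≥ -(c * B ^ 2 / 2) * (T : ℝ) ^ ((3 : ℝ) / 4) := by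
  set b := c / (T : ℝ) ^ ((1 : ℝ) / 4)
  have hb : 0 < b := div_pos hc (Real.rpow_pos_of_pos (by exact_mod_cast hT) _)
  have hrec' : ∀ t, μ (t + 1) = max (μ t + b * g t) 0 := fun t => hβ t ▸ hrec t
  have hbound := sum_mul_ge_of_projected_step hrec' hb hg hμ1 T
  calc -(c * B ^ 2 / 2) * (T : ℝ) ^ ((3 : ℝ) / 4)
      = -(T * b * B ^ 2 / 2) := by rw [natCast_mul_div_rpow_one_fourth hT c]; ring
    _ ≤ _ := hbound

theorem amortized_dual_penalty (μ g β : ℕ → ℝ) (T : ℕ) (hT : 1 ≤ T)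
    (c B : ℝ) (hc : 0 < c) (hB : 0 ≤ B)
    (hg : ∀ t, |g t| ≤ B)
    (hβ : ∀ t, β t = c / (T : ℝ) ^ ((1 : ℝ) / 4))
    (hμ1 : μ 1 = 0)
    (hrec : ∀ t, μ (t + 1) = max (μ t + β t * g t) 0) :
    ∑ t ∈ Finset.Icc 1 T, μ t * g t ≥ -(c * B ^ 2 / 2) * (T : ℝ) ^ ((3 : ℝ) / 4) :=
  amortized_dual_penalty_general μ g β T hT c B hc hg hβ hμ1 hrec
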